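/- Let n ≥ 1, positive integers m₁,…,m_n, and g₁,…,g_n : ℕ₀ → ℂ with g_j(0) = 0 for all j. Define G_j : 𝒫 → ℂ by G_j(λ) := g_j(r_{m_j}(λ)). Then in ℂ⟦u₁,u₂,…⟧ the connected u-bracket satisfies ⟨G₁ ⊗ ⋯ ⊗ G_n⟩_u = 𝟙[m₁ = ⋯ = m_n] · Σ_{r≥1} g_{[n]}(r)·u_m^r, where m := m₁ = ⋯ = m_n and g_{[n]} := Σ_{α∈Π(n)} μ(α,1̂) · ⊛_{A∈α} ∂g_A, with g_A(r) := ∏_{a∈A} g_a(r), the convolution over a single block being the function itself. -/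

import Mathlib

open scoped Classical
open Finset

noncomputable section

/-- A partition: a finitely supported multiplicity function on the positive integers. -/
abbrev Ptn : Type := ℕ+ →₀ ℕ

/-- The size `|λ| = Σ_m m · r_m(λ)` of a partition. -/
def psize (l : Ptn) : ℕ := l.sum fun m r => (m : ℕ) * r

/-- The power series `Σ_λ f(λ) u_λ ∈ ℂ⟦u₁,u₂,…⟧`: its coefficient on the monomial
`u_λ = ∏_m u_m^{r_m(λ)}` is `f(λ)`. -/
def useries (f : Ptn → ℂ) : MvPowerSeries ℕ+ ℂ := f

/-- The u-bracket `⟨f⟩_u = (Σ_λ f(λ)u_λ)·(Σ_λ u_λ)⁻¹`. -/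
def ubracket (f : Ptn → ℂ) : MvPowerSeries ℕ+ ℂ :=
  useries f * (useries fun _ => 1)⁻¹

/-- The power series `Σ_λ f(λ) q^{|λ|}`; the coefficient of `q^n` is `Σ_{|λ|=n} f(λ)`
(a finite sum, written here as a `tsum`). -/
def qseries (f : Ptn → ℂ) : PowerSeries ℂ :=
  PowerSeries.mk fun n => ∑' l : {l : Ptn // psize l = n}, f l

/-- The q-bracket `⟨f⟩_q`. -/
def qbracket (f : Ptn → ℂ) : PowerSeries ℂ :=
  qseries f * (qseries fun _ => 1)⁻¹

/-- `α` is a set partition of `{1,…,k}` (as `Fin k`). -/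
def IsSetPtn {k : ℕ} (α : Finset (Finset (Fin k))) : Prop :=
  (∀ A ∈ α, A.Nonempty) ∧ ∀ x : Fin k, ∃! A, A ∈ α ∧ x ∈ A

/-- `Π(k)`: the set of set partitions of `{1,…,k}`. -/
def setPtns (k : ℕ) : Finset (Finset (Finset (Fin k))) :=
  Finset.univ.filter IsSetPtn

/-- `μ(α,1̂) = (−1)^{|α|+1}(|α|−1)!`. -/
def muTop {k : ℕ} (α : Finset (Finset (Fin k))) : ℂ :=
  (-1) ^ (α.card + 1) * (α.card - 1).factorial

/-- The connected u-bracket `⟨f₁ ⊗ ⋯ ⊗ f_k⟩_u`. -/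
def connU {k : ℕ} (f : Fin k → Ptn → ℂ) : MvPowerSeries ℕ+ ℂ :=
  ∑ α ∈ setPtns k, MvPowerSeries.C (σ := ℕ+) (R := ℂ) (muTop α) *
    ∏ A ∈ α, ubracket fun l => ∏ a ∈ A, f a l

/-- The connected q-bracket `⟨f₁ ⊗ ⋯ ⊗ f_k⟩_q`. -/
def connQ {k : ℕ} (f : Fin k → Ptn → ℂ) : PowerSeries ℂ :=
  ∑ α ∈ setPtns k, PowerSeries.C (R := ℂ) (muTop α) *
    ∏ A ∈ α, qbracket fun l => ∏ a ∈ A, f a l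

/-- `t_N(ζ;λ) = 1 + Σ_{m≥1}(ζ^m + ζ^{−m})·𝟙[r_m(λ) ≥ Nm]`. -/
def tFn (N : ℕ) (ζ : ℂ) (l : Ptn) : ℂ :=
  1 + ∑ m ∈ l.support,
    (ζ ^ (m : ℕ) + ζ ^ (-((m : ℕ) : ℤ))) * (if N * (m : ℕ) ≤ l m then 1 else 0)

/-- `s(ρ;λ) = ρ/(1−ρ) + 1/2 + Σ_{m≥1}(ρ^m − ρ^{−m})·r_m(λ)`. -/
def sFn (ρ : ℂ) (l : Ptn) : ℂ :=
  ρ / (1 - ρ) + 1 / 2 + ∑ m ∈ l.support,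
    (ρ ^ (m : ℕ) - ρ ^ (-((m : ℕ) : ℤ))) * (l m : ℂ)

/-- The discrete derivative: `∂g(r) = g(r) − g(r−1)` for `r ≥ 2` and `∂g(1) = g(1)`
(for functions with `g(0) = 0` this is `g(r) − g(r−1)` for all `r ≥ 1`; we also set
`∂g(0) = 0`). -/
def disc (g : ℕ → ℂ) : ℕ → ℂ := fun r => if r = 0 then 0 else g r - g (r - 1)

/-- `g_{[n]} = Σ_{α∈Π(n)} μ(α,1̂) ⊛_{A∈α} ∂g_A`, where `g_A(r) = ∏_{a∈A} g_a(r)` and the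
iterated discrete convolution `⊛` of functions vanishing at `0` is realised as the
coefficient function of the product of the associated generating power series
(for a single block this is the function itself, and
`(g ∗ h)(r) = Σ_{j=1}^{r−1} g(j)h(r−j)` for functions vanishing at `0`). -/
def gConn {n : ℕ} (g : Fin n → ℕ → ℂ) : ℕ → ℂ := fun r =>
  PowerSeries.coeff (R := ℂ) r
    (∑ α ∈ setPtns n, PowerSeries.C (R := ℂ) (muTop α) *
      ∏ A ∈ α, PowerSeries.mk (disc fun x => ∏ a ∈ A, g a x))



section Aux

abbrev FP (n : ℕ) := Finpartition (Finset.univ : Finset (Fin n))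
variable {n : ℕ}
variable (B₀ : Finset (Fin n))

lemma avoid_parts_mem {s : Finset (Fin n)} (Q : Finpartition s) {b : Finset (Fin n)}
    (hb : b ∈ Q.parts) : (Q.avoid b).parts = Q.parts.erase b := by
  ext B
  rw [Q.mem_avoid, Finset.mem_erase]
  constructor
  · rintro ⟨d, hd, hdb, rfl⟩
    have hne : d ≠ b := fun h => hdb (h ▸ le_refl _)
    have hdisj : Disjoint d b := Q.disjoint hd hb hne
    rw [Finset.sdiff_eq_self_of_disjoint hdisj]
    exact ⟨hne, hd⟩
  · rintro ⟨hne, hB⟩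
    have hdisj : Disjoint B b := Q.disjoint hB hb hne
    refine ⟨B, hB, fun h => ?_, Finset.sdiff_eq_self_of_disjoint hdisj⟩
    · exact (Q.nonempty_of_mem_parts hB).ne_empty (disjoint_self.1 (hdisj.mono_right h))

lemma avoid_parts_sub {s : Finset (Fin n)} (Q : Finpartition s) {b X : Finset (Fin n)}
    (hX : X ∈ Q.parts) (hbX : b ⊆ X) (hne : X ≠ b) :
    (Q.avoid b).parts = insert (X \ b) (Q.parts.erase X) := by
  ext B
  rw [Q.mem_avoid, Finset.mem_insert, Finset.mem_erase]
  constructor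
  · rintro ⟨d, hd, hdb, rfl⟩
    rcases eq_or_ne d X with rfl | hdX
    · exact Or.inl rfl
    · have hdisj : Disjoint d b := (Q.disjoint hd hX hdX).mono_right hbX
      rw [Finset.sdiff_eq_self_of_disjoint hdisj]
      exact Or.inr ⟨hdX, hd⟩
  · rintro (rfl | ⟨hBX, hB⟩)
    · refine ⟨X, hX, fun h => hne (Finset.Subset.antisymm h hbX), rfl⟩
    · have hdisj : Disjoint B b := (Q.disjoint hB hX hBX).mono_right hbX
      refine ⟨B, hB, fun h => ?_, Finset.sdiff_eq_self_of_disjoint hdisj⟩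
      exact (Q.nonempty_of_mem_parts hB).ne_empty (disjoint_self.1 (hdisj.mono_right h))

lemma avoid_mono {s : Finset (Fin n)} {P Q : Finpartition s} (h : P ≤ Q) (b : Finset (Fin n)) :
    P.avoid b ≤ Q.avoid b := by
  intro B hB
  rw [P.mem_avoid] at hB
  obtain ⟨d, hd, hdb, rfl⟩ := hB
  obtain ⟨e, he, hde⟩ := h hd
  refine ⟨e \ b, Q.mem_avoid.2 ⟨e, he, fun hc => hdb (hde.trans hc), rfl⟩, ?_⟩
  exact Finset.sdiff_subset_sdiff hde (le_refl _)

variable (B₀ : Finset (Fin n))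

lemma sdiff_disj_B (hB₀ : B₀.Nonempty) : Disjoint (Finset.univ \ B₀) B₀ := Finset.sdiff_disjoint

/-- Merge the block `B₀` (or `B₀ ∪ t`) into a partition of `univ \ B₀`. -/
def mergeFP (hB₀ : B₀.Nonempty)
    (p : (β : Finpartition (Finset.univ \ B₀)) × Finset (Fin n)) : FP n :=
  if hp : p.2 ∈ p.1.parts then
    (p.1.avoid p.2).extend (b := B₀ ∪ p.2)
      (by simp only [Finset.bot_eq_empty, ← Finset.nonempty_iff_ne_empty]
          exact hB₀.mono Finset.subset_union_left)
      (by refine Finset.disjoint_union_right.2 ⟨?_, ?_⟩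
          · exact Finset.sdiff_disjoint.mono_left Finset.sdiff_subset
          · exact Finset.sdiff_disjoint)
      (by have ht : p.2 ⊆ Finset.univ \ B₀ := p.1.le hp
          rw [Finset.sup_eq_union, Finset.union_comm B₀ p.2, ← Finset.union_assoc,
            Finset.sdiff_union_of_subset ht, Finset.sdiff_union_of_subset (Finset.subset_univ B₀)])
  else
    p.1.extend (b := B₀)
      (by simp only [Finset.bot_eq_empty, ← Finset.nonempty_iff_ne_empty]; exact hB₀)
      Finset.sdiff_disjoint
      (by rw [Finset.sup_eq_union, Finset.sdiff_union_of_subset (Finset.subset_univ B₀)])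

lemma mergeFP_parts_empty (hB₀ : B₀.Nonempty)
    (p : (β : Finpartition (Finset.univ \ B₀)) × Finset (Fin n)) (hp : p.2 ∉ p.1.parts) :
    (mergeFP B₀ hB₀ p).parts = insert B₀ p.1.parts := by
  simp only [mergeFP, dif_neg hp]; rfl

lemma mergeFP_parts_mem (hB₀ : B₀.Nonempty)
    (p : (β : Finpartition (Finset.univ \ B₀)) × Finset (Fin n)) (hp : p.2 ∈ p.1.parts) :
    (mergeFP B₀ hB₀ p).parts = insert (B₀ ∪ p.2) (p.1.parts.erase p.2) := by
  simp only [mergeFP, dif_pos hp]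
  show insert (B₀ ∪ p.2) (p.1.avoid p.2).parts = _
  rw [avoid_parts_mem p.1 hp]

def muR (R : Type*) [CommRing R] (k : ℕ) : R :=
  (-1) ^ (k + 1) * ((k - 1).factorial : R)

lemma coarse_sum {R : Type*} [CommRing R] (c : FP n) (hc : 2 ≤ #c.parts) :
    ∑ Q ∈ Finset.univ.filter (fun Q : FP n => c ≤ Q), muR R #Q.parts = 0 := by
  obtain ⟨B₀, hB₀⟩ : c.parts.Nonempty := Finset.card_pos.1 (by omega)
  have hB₀ne : B₀.Nonempty := c.nonempty_of_mem_parts hB₀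
  obtain ⟨x₀, hx₀⟩ := c.nonempty_of_mem_parts hB₀
  have hmemU : ∀ (β : Finpartition (Finset.univ \ B₀)) (A : Finset (Fin n)),
      A ∈ β.parts → ¬ B₀ ⊆ A := by
    intro β A hA hBA
    exact (Finset.mem_sdiff.1 ((β.le hA) (hBA hx₀))).2 hx₀
  have hUne : (Finset.univ \ B₀ : Finset (Fin n)).Nonempty := by
    obtain ⟨A, hA⟩ : (c.parts.erase B₀).Nonempty := by
      rw [← Finset.card_pos, Finset.card_erase_of_mem hB₀]; omega
    obtain ⟨hAne, hAp⟩ := Finset.mem_erase.1 hA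
    obtain ⟨y, hy⟩ := c.nonempty_of_mem_parts hAp
    exact ⟨y, Finset.mem_sdiff.2 ⟨Finset.mem_univ _,
      fun hyB => Finset.disjoint_left.1 (c.disjoint hAp hB₀ hAne) hy hyB⟩⟩
  have hfacts : ∀ Q : FP n, c ≤ Q → B₀ ⊆ Q.part x₀ := by
    intro Q hQ
    obtain ⟨e, he, hBe⟩ := hQ hB₀
    rwa [Q.part_eq_of_mem he (hBe hx₀)]
  -- left inverse
  have hGF : ∀ Q : FP n, c ≤ Q →
      mergeFP B₀ hB₀ne ⟨Q.avoid B₀, Q.part x₀ \ B₀⟩ = Q := by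
    intro Q hQ
    have hBX := hfacts Q hQ
    have hXp : Q.part x₀ ∈ Q.parts := Q.part_mem.2 (Finset.mem_univ x₀)
    apply Finpartition.ext
    by_cases hXB : Q.part x₀ = B₀
    · have hsnd : Q.part x₀ \ B₀ = ∅ := by rw [hXB, Finset.sdiff_self]
      have hp : Q.part x₀ \ B₀ ∉ (Q.avoid B₀).parts := by
        rw [hsnd]; exact (Q.avoid B₀).bot_notMem
      rw [mergeFP_parts_empty B₀ hB₀ne _ hp]
      show insert B₀ (Q.avoid B₀).parts = Q.parts
      rw [avoid_parts_mem Q (hXB ▸ hXp)]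
      exact Finset.insert_erase (hXB ▸ hXp)
    · have htne : (Q.part x₀ \ B₀).Nonempty := by
        rw [Finset.sdiff_nonempty]
        exact fun h => hXB (Finset.Subset.antisymm h hBX)
      have hav := avoid_parts_sub Q hXp hBX hXB
      have hp : Q.part x₀ \ B₀ ∈ (Q.avoid B₀).parts := by
        rw [hav]; exact Finset.mem_insert_self _ _
      rw [mergeFP_parts_mem B₀ hB₀ne _ hp]
      show insert (B₀ ∪ (Q.part x₀ \ B₀)) ((Q.avoid B₀).parts.erase (Q.part x₀ \ B₀)) = Q.parts
      rw [hav]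
      have hnotmem : Q.part x₀ \ B₀ ∉ Q.parts.erase (Q.part x₀) := by
        intro hmem
        obtain ⟨hne', hmem'⟩ := Finset.mem_erase.1 hmem
        have hd := Q.disjoint hmem' hXp hne'
        exact htne.ne_empty (disjoint_self.1 (hd.mono_right Finset.sdiff_subset))
      rw [Finset.erase_insert hnotmem, Finset.union_sdiff_of_subset hBX]
      exact Finset.insert_erase hXp
  -- right inverse
  have hFG : ∀ (β : Finpartition (Finset.univ \ B₀)) (t : Finset (Fin n)),
      t ∈ insert ∅ β.parts →
      ((⟨(mergeFP B₀ hB₀ne ⟨β, t⟩).avoid B₀, (mergeFP B₀ hB₀ne ⟨β, t⟩).part x₀ \ B₀⟩ :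
        (β : Finpartition (Finset.univ \ B₀)) × Finset (Fin n))) = ⟨β, t⟩ := by
    intro β t htm
    by_cases hp : t ∈ β.parts
    · have hparts := mergeFP_parts_mem B₀ hB₀ne ⟨β, t⟩ hp
      have htU : t ⊆ Finset.univ \ B₀ := β.le hp
      have htB : Disjoint t B₀ := Finset.sdiff_disjoint.mono_left htU
      have htne : t.Nonempty := β.nonempty_of_mem_parts hp
      have hcan : (B₀ ∪ t) \ B₀ = t := by
        rw [Finset.union_sdiff_left, Finset.sdiff_eq_self_of_disjoint htB]
      have hXmem : B₀ ∪ t ∈ (mergeFP B₀ hB₀ne ⟨β, t⟩).parts := by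
        rw [hparts]; exact Finset.mem_insert_self _ _
      have hXpart : (mergeFP B₀ hB₀ne ⟨β, t⟩).part x₀ = B₀ ∪ t :=
        Finpartition.part_eq_of_mem _ hXmem (Finset.mem_union_left _ hx₀)
      have hsnd : (mergeFP B₀ hB₀ne ⟨β, t⟩).part x₀ \ B₀ = t := by rw [hXpart, hcan]
      have hXne : B₀ ∪ t ≠ B₀ := by
        intro h
        have hsub : t ⊆ B₀ := by
          rw [← h]; exact Finset.subset_union_right
        exact htne.ne_empty (disjoint_self.1 (htB.mono_right hsub))
      have hXnotβ : B₀ ∪ t ∉ β.parts.erase t := fun h =>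
        hmemU β _ (Finset.mem_of_mem_erase h) Finset.subset_union_left
      have hfst : (mergeFP B₀ hB₀ne ⟨β, t⟩).avoid B₀ = β := by
        apply Finpartition.ext
        rw [avoid_parts_sub _ hXmem Finset.subset_union_left hXne, hcan, hparts,
          Finset.erase_insert hXnotβ, Finset.insert_erase hp]
      rw [hfst, hsnd]
    · have ht0 : t = ∅ := by
        rcases Finset.mem_insert.1 htm with h | h
        · exact h
        · exact absurd h hp
      subst ht0
      have hparts := mergeFP_parts_empty B₀ hB₀ne ⟨β, ∅⟩ hp
      have hB₀notβ : B₀ ∉ β.parts := fun h => hmemU β _ h (subset_refl _)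
      have hXmem : B₀ ∈ (mergeFP B₀ hB₀ne ⟨β, ∅⟩).parts := by
        rw [hparts]; exact Finset.mem_insert_self _ _
      have hXpart : (mergeFP B₀ hB₀ne ⟨β, ∅⟩).part x₀ = B₀ :=
        Finpartition.part_eq_of_mem _ hXmem hx₀
      have hsnd : (mergeFP B₀ hB₀ne ⟨β, ∅⟩).part x₀ \ B₀ = ∅ := by
        rw [hXpart, Finset.sdiff_self]
      have hfst : (mergeFP B₀ hB₀ne ⟨β, ∅⟩).avoid B₀ = β := by
        apply Finpartition.ext
        rw [avoid_parts_mem _ hXmem, hparts, Finset.erase_insert hB₀notβ]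
      rw [hfst, hsnd]
  have key : ∑ Q ∈ Finset.univ.filter (fun Q : FP n => c ≤ Q), muR R #Q.parts
      = ∑ p ∈ (Finset.univ.filter
            (fun β : Finpartition (Finset.univ \ B₀) => c.avoid B₀ ≤ β)).sigma
          (fun β => insert ∅ β.parts),
          muR R #(mergeFP B₀ hB₀ne p).parts := by
    refine Finset.sum_bij' (fun Q _ => (⟨Q.avoid B₀, Q.part x₀ \ B₀⟩ :
        (β : Finpartition (Finset.univ \ B₀)) × Finset (Fin n)))
      (fun p _ => mergeFP B₀ hB₀ne p) ?_ ?_ ?_ ?_ ?_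
    · intro Q hQm
      have hQ : c ≤ Q := (Finset.mem_filter.1 hQm).2
      have hBX := hfacts Q hQ
      refine Finset.mem_sigma.2 ⟨Finset.mem_filter.2 ⟨Finset.mem_univ _, avoid_mono hQ B₀⟩, ?_⟩
      show Q.part x₀ \ B₀ ∈ insert ∅ (Q.avoid B₀).parts
      by_cases hXB : Q.part x₀ = B₀
      · rw [hXB, Finset.sdiff_self]; exact Finset.mem_insert_self _ _
      · rw [avoid_parts_sub Q (Q.part_mem.2 (Finset.mem_univ x₀)) hBX hXB]
        exact Finset.mem_insert_of_mem (Finset.mem_insert_self _ _)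
    · rintro ⟨β, t⟩ hpm
      obtain ⟨hβm, htm⟩ := Finset.mem_sigma.1 hpm
      have hβ : c.avoid B₀ ≤ β := (Finset.mem_filter.1 hβm).2
      refine Finset.mem_filter.2 ⟨Finset.mem_univ _, ?_⟩
      intro A hA
      by_cases hp : t ∈ β.parts
      · have hparts := mergeFP_parts_mem B₀ hB₀ne ⟨β, t⟩ hp
        rcases eq_or_ne A B₀ with hAB | hAB
        · exact ⟨B₀ ∪ t, hparts ▸ Finset.mem_insert_self _ _,
            by rw [hAB]; exact Finset.subset_union_left⟩
        · have hA' : A ∈ (c.avoid B₀).parts := by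
            rw [avoid_parts_mem c hB₀]; exact Finset.mem_erase.2 ⟨hAB, hA⟩
          obtain ⟨e, he, hAe⟩ := hβ hA'
          rcases eq_or_ne e t with rfl | het
          · exact ⟨B₀ ∪ e, hparts ▸ Finset.mem_insert_self _ _,
              hAe.trans Finset.subset_union_right⟩
          · exact ⟨e, hparts ▸ Finset.mem_insert_of_mem (Finset.mem_erase.2 ⟨het, he⟩), hAe⟩
      · have ht0 : t = ∅ := by
          rcases Finset.mem_insert.1 htm with h | h
          · exact h
          · exact absurd h hp
        have hparts := mergeFP_parts_empty B₀ hB₀ne ⟨β, t⟩ hp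
        rcases eq_or_ne A B₀ with hAB | hAB
        · exact ⟨B₀, hparts ▸ Finset.mem_insert_self _ _, by rw [hAB]⟩
        · have hA' : A ∈ (c.avoid B₀).parts := by
            rw [avoid_parts_mem c hB₀]; exact Finset.mem_erase.2 ⟨hAB, hA⟩
          obtain ⟨e, he, hAe⟩ := hβ hA'
          exact ⟨e, hparts ▸ Finset.mem_insert_of_mem he, hAe⟩
    · intro Q hQm
      exact hGF Q (Finset.mem_filter.1 hQm).2
    · rintro ⟨β, t⟩ hpm
      exact hFG β t (Finset.mem_sigma.1 hpm).2
    · intro Q hQm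
      rw [hGF Q (Finset.mem_filter.1 hQm).2]
  rw [key, Finset.sum_sigma]
  refine Finset.sum_eq_zero fun β hβm => ?_
  have hUne' : (Finset.univ \ B₀ : Finset (Fin n)) ≠ ⊥ := by
    rw [Finset.bot_eq_empty, ← Finset.nonempty_iff_ne_empty]; exact hUne
  have hbne : β.parts.Nonempty := β.parts_nonempty hUne'
  have hbpos : 0 < #β.parts := Finset.card_pos.2 hbne
  have h0 : (∅ : Finset (Fin n)) ∉ β.parts := β.bot_notMem
  rw [Finset.sum_insert h0]
  have hB₀notβ : B₀ ∉ β.parts := fun h => hmemU β _ h (subset_refl _)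
  have hcard0 : #(mergeFP B₀ hB₀ne ⟨β, ∅⟩).parts = #β.parts + 1 := by
    rw [mergeFP_parts_empty B₀ hB₀ne ⟨β, ∅⟩ h0, Finset.card_insert_of_notMem hB₀notβ]
  have hcard1 : ∀ t ∈ β.parts, #(mergeFP B₀ hB₀ne ⟨β, t⟩).parts = #β.parts := by
    intro t ht
    have hX : B₀ ∪ t ∉ β.parts.erase t := fun h =>
      hmemU β _ (Finset.mem_of_mem_erase h) Finset.subset_union_left
    rw [mergeFP_parts_mem B₀ hB₀ne ⟨β, t⟩ ht, Finset.card_insert_of_notMem hX,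
      Finset.card_erase_of_mem ht]
    omega
  rw [hcard0, Finset.sum_congr rfl (fun t ht => by rw [hcard1 t ht]), Finset.sum_const,
    nsmul_eq_mul]
  have hfact : (#β.parts : R) * ((#β.parts - 1).factorial : R) = ((#β.parts).factorial : R) := by
    rw [← Nat.cast_mul, Nat.mul_factorial_pred hbpos.ne']
  simp only [muR, Nat.add_sub_cancel]
  linear_combination ((-1 : R)) ^ (#β.parts + 1) * hfact

lemma weisner {R : Type*} [CommRing R] (pp : FP n) (hpp : 2 ≤ #pp.parts) (c : FP n)
    (hc : c ≤ pp) :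
    ∑ Q ∈ Finset.univ.filter (fun Q : FP n => Q ⊓ pp = c), muR R #Q.parts = 0 := by
  revert hc
  refine WellFounded.induction
    (IsWellFounded.wf : WellFounded ((· > ·) : FP n → FP n → Prop))
    (C := fun c => c ≤ pp →
      ∑ Q ∈ Finset.univ.filter (fun Q : FP n => Q ⊓ pp = c), muR R #Q.parts = 0) c ?_
  clear c
  intro c IH hc
  have hcc : 2 ≤ #c.parts := le_trans hpp (Finpartition.card_mono hc)
  have hN := coarse_sum (R := R) c hcc
  have hsame : Finset.univ.filter (fun Q : FP n => c ≤ Q)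
      = Finset.univ.filter (fun Q : FP n => c ≤ Q ⊓ pp) := by
    apply Finset.filter_congr
    intro Q _
    simp only [le_inf_iff, eq_iff_iff]
    exact ⟨fun h => ⟨h, hc⟩, fun h => h.1⟩
  have hfib := Finset.sum_fiberwise_of_maps_to (g := fun Q : FP n => Q ⊓ pp)
    (s := Finset.univ.filter (fun Q : FP n => c ≤ Q ⊓ pp))
    (t := Finset.univ.filter (fun c' : FP n => c ≤ c'))
    (fun Q hQ => Finset.mem_filter.2 ⟨Finset.mem_univ _, (Finset.mem_filter.1 hQ).2⟩)
    (fun Q : FP n => muR R #Q.parts)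
  rw [hsame] at hN
  rw [← hfib] at hN
  have hinner : ∀ c' ∈ Finset.univ.filter (fun c' : FP n => c ≤ c'),
      ∑ Q ∈ (Finset.univ.filter (fun Q : FP n => c ≤ Q ⊓ pp)).filter
          (fun Q => Q ⊓ pp = c'), muR R #Q.parts
      = ∑ Q ∈ Finset.univ.filter (fun Q : FP n => Q ⊓ pp = c'), muR R #Q.parts := by
    intro c' hc'
    have hcc' : c ≤ c' := (Finset.mem_filter.1 hc').2
    congr 1
    ext Q
    simp only [Finset.mem_filter, Finset.mem_univ, true_and]
    exact ⟨fun h => h.2, fun h => ⟨h ▸ hcc', h⟩⟩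
  rw [Finset.sum_congr rfl hinner] at hN
  have hcmem : c ∈ Finset.univ.filter (fun c' : FP n => c ≤ c') :=
    Finset.mem_filter.2 ⟨Finset.mem_univ _, le_refl _⟩
  rw [← Finset.add_sum_erase _ _ hcmem] at hN
  have hrest : ∀ c' ∈ (Finset.univ.filter (fun c' : FP n => c ≤ c')).erase c,
      ∑ Q ∈ Finset.univ.filter (fun Q : FP n => Q ⊓ pp = c'), muR R #Q.parts = 0 := by
    intro c' hc'
    obtain ⟨hne, hmem⟩ := Finset.mem_erase.1 hc'
    have hlt : c < c' := lt_of_le_of_ne (Finset.mem_filter.1 hmem).2 (Ne.symm hne)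
    by_cases hc'pp : c' ≤ pp
    · exact IH c' hlt hc'pp
    · refine Finset.sum_eq_zero fun Q hQ => ?_
      exact absurd ((Finset.mem_filter.1 hQ).2 ▸ inf_le_right) hc'pp
  rw [Finset.sum_eq_zero hrest, add_zero] at hN
  exact hN

/-- Build a `Finpartition` from a set partition. -/
def toFP (α : Finset (Finset (Fin n))) (hα : IsSetPtn α) : FP n where
  parts := α
  supIndep := by
    rw [Finset.supIndep_iff_pairwiseDisjoint]
    intro A hA B hB hAB
    simp only [Function.onFun, id_eq, Finset.disjoint_left]
    intro x hxA hxB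
    obtain ⟨C, -, hC⟩ := hα.2 x
    exact hAB ((hC A ⟨hA, hxA⟩).trans (hC B ⟨hB, hxB⟩).symm)
  sup_parts := by
    apply le_antisymm
    · exact Finset.sup_le fun A _ => Finset.subset_univ A
    · intro x _
      obtain ⟨A, ⟨hA, hxA⟩, -⟩ := hα.2 x
      exact Finset.mem_sup.2 ⟨A, hA, hxA⟩
  bot_notMem := fun h => by
    obtain ⟨x, hx⟩ := hα.1 _ h
    exact absurd hx (Finset.notMem_empty x)

lemma parts_isSetPtn (Q : FP n) : IsSetPtn Q.parts :=
  ⟨fun A hA => Q.nonempty_of_mem_parts hA, fun x => Q.existsUnique_mem (Finset.mem_univ x)⟩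

lemma sum_setPtns {M : Type*} [AddCommMonoid M] (F : Finset (Finset (Fin n)) → M) :
    ∑ α ∈ setPtns n, F α = ∑ Q : FP n, F Q.parts := by
  refine Finset.sum_bij' (fun α hα => toFP α (Finset.mem_filter.1 hα).2)
    (fun Q _ => Q.parts) ?_ ?_ ?_ ?_ ?_
  · intro α hα; exact Finset.mem_univ _
  · intro Q _
    exact Finset.mem_filter.2 ⟨Finset.mem_univ _, parts_isSetPtn Q⟩
  · intro α hα; rfl
  · intro Q _; rfl
  · intro α hα; rfl

lemma vanishFP {R : Type*} [CommRing R] (pp : FP n) (hpp : 2 ≤ #pp.parts) (w : FP n → R) :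
    ∑ Q : FP n, muR R #Q.parts * w (Q ⊓ pp) = 0 := by
  classical
  rw [← Finset.sum_fiberwise (Finset.univ) (fun Q : FP n => Q ⊓ pp)
      (fun Q => muR R #Q.parts * w (Q ⊓ pp))]
  refine Finset.sum_eq_zero fun c _ => ?_
  by_cases h : c ≤ pp
  · calc ∑ Q ∈ Finset.univ.filter (fun Q : FP n => Q ⊓ pp = c),
          muR R #Q.parts * w (Q ⊓ pp)
        = ∑ Q ∈ Finset.univ.filter (fun Q : FP n => Q ⊓ pp = c),
          muR R #Q.parts * w c := by
          refine Finset.sum_congr rfl fun Q hQ => ?_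
          rw [(Finset.mem_filter.1 hQ).2]
      _ = (∑ Q ∈ Finset.univ.filter (fun Q : FP n => Q ⊓ pp = c),
          muR R #Q.parts) * w c := by rw [Finset.sum_mul]
      _ = 0 := by rw [weisner pp hpp c h, zero_mul]
  · refine Finset.sum_eq_zero fun Q hQ => ?_
    exact absurd ((Finset.mem_filter.1 hQ).2 ▸ inf_le_right) h

lemma prodlem {R : Type*} [CommRing R] (P : Finset (Fin n)) (pp : FP n)
    (hpp : pp.parts = {P, Finset.univ \ P}) (x y : Finset (Fin n) → R)
    (hx : x ∅ = 1) (hy : y ∅ = 1) (Q : FP n) :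
    ∏ A ∈ Q.parts, (x (A ∩ P) * y (A \ P)) =
      ∏ B ∈ (Q ⊓ pp).parts, (if B ⊆ P then x B else y B) := by
  have hinter : ∀ A : Finset (Fin n), A ∩ (Finset.univ \ P) = A \ P := by
    intro A; ext z; simp [Finset.mem_sdiff, Finset.mem_inter]
  set s₁ := (Q.parts.filter (fun A => (A ∩ P).Nonempty)).image (· ∩ P) with hs₁
  set s₂ := (Q.parts.filter (fun A => (A \ P).Nonempty)).image (fun A => A \ P) with hs₂
  have hparts : (Q ⊓ pp).parts = s₁ ∪ s₂ := by
    rw [Finpartition.parts_inf, hpp]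
    ext B
    simp only [hs₁, hs₂, Finset.mem_erase, Finset.mem_image, Finset.mem_union,
      Finset.mem_product, Finset.bot_eq_empty, Finset.mem_filter, Prod.exists,
      Finset.mem_insert, Finset.mem_singleton, Finset.inf_eq_inter]
    constructor
    · rintro ⟨hBne, a, cc, ⟨ha, hcc⟩, rfl⟩
      rcases hcc with rfl | rfl
      · exact Or.inl ⟨a, ⟨ha, Finset.nonempty_iff_ne_empty.2 hBne⟩, rfl⟩
      · rw [hinter a] at hBne ⊢
        exact Or.inr ⟨a, ⟨ha, Finset.nonempty_iff_ne_empty.2 hBne⟩, rfl⟩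
    · rintro (⟨a, ⟨ha, hane⟩, rfl⟩ | ⟨a, ⟨ha, hane⟩, rfl⟩)
      · exact ⟨hane.ne_empty, a, P, ⟨ha, Or.inl rfl⟩, rfl⟩
      · exact ⟨hane.ne_empty, a, Finset.univ \ P, ⟨ha, Or.inr rfl⟩, hinter a⟩
  have hdisj : Disjoint s₁ s₂ := by
    rw [Finset.disjoint_left]
    rintro B hB1 hB2
    obtain ⟨A, hA, rfl⟩ := Finset.mem_image.1 hB1
    obtain ⟨A', hA', hEq⟩ := Finset.mem_image.1 hB2
    have hne : (A ∩ P).Nonempty := (Finset.mem_filter.1 hA).2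
    have hd : Disjoint (A ∩ P) P := hEq ▸ Finset.sdiff_disjoint
    exact hne.ne_empty (disjoint_self.1 (hd.mono_right Finset.inter_subset_right))
  have hinj₁ : ∀ A ∈ Q.parts.filter (fun A => (A ∩ P).Nonempty),
      ∀ A' ∈ Q.parts.filter (fun A => (A ∩ P).Nonempty), A ∩ P = A' ∩ P → A = A' := by
    intro A hA A' hA' hEq
    obtain ⟨z, hz⟩ := (Finset.mem_filter.1 hA).2
    have hz' : z ∈ A' ∩ P := hEq ▸ hz
    exact Q.eq_of_mem_parts (Finset.mem_filter.1 hA).1 (Finset.mem_filter.1 hA').1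
      (Finset.mem_inter.1 hz).1 (Finset.mem_inter.1 hz').1
  have hinj₂ : ∀ A ∈ Q.parts.filter (fun A => (A \ P).Nonempty),
      ∀ A' ∈ Q.parts.filter (fun A => (A \ P).Nonempty), A \ P = A' \ P → A = A' := by
    intro A hA A' hA' hEq
    obtain ⟨z, hz⟩ := (Finset.mem_filter.1 hA).2
    have hz' : z ∈ A' \ P := hEq ▸ hz
    exact Q.eq_of_mem_parts (Finset.mem_filter.1 hA).1 (Finset.mem_filter.1 hA').1
      (Finset.mem_sdiff.1 hz).1 (Finset.mem_sdiff.1 hz').1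
  rw [hparts, Finset.prod_union hdisj]
  have h1 : ∏ B ∈ s₁, (if B ⊆ P then x B else y B) = ∏ B ∈ s₁, x B := by
    refine Finset.prod_congr rfl fun B hB => ?_
    obtain ⟨A, _, rfl⟩ := Finset.mem_image.1 hB
    rw [if_pos Finset.inter_subset_right]
  have h2 : ∏ B ∈ s₂, (if B ⊆ P then x B else y B) = ∏ B ∈ s₂, y B := by
    refine Finset.prod_congr rfl fun B hB => ?_
    obtain ⟨A, hA, rfl⟩ := Finset.mem_image.1 hB
    have hne : (A \ P).Nonempty := (Finset.mem_filter.1 hA).2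
    refine if_neg fun hsub => ?_
    exact hne.ne_empty (disjoint_self.1 ((Finset.sdiff_disjoint).mono_right hsub))
  rw [h1, h2, Finset.prod_image hinj₁, Finset.prod_image hinj₂, Finset.prod_mul_distrib]
  congr 1
  · refine (Finset.prod_subset (Finset.filter_subset _ _) ?_).symm
    intro A hA hA'
    have : A ∩ P = ∅ := by
      by_contra h
      exact hA' (Finset.mem_filter.2 ⟨hA, Finset.nonempty_iff_ne_empty.2 h⟩)
    rw [this, hx]
  · refine (Finset.prod_subset (Finset.filter_subset _ _) ?_).symm
    intro A hA hA'
    have : A \ P = ∅ := by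
      by_contra h
      exact hA' (Finset.mem_filter.2 ⟨hA, Finset.nonempty_iff_ne_empty.2 h⟩)
    rw [this, hy]

set_option maxHeartbeats 1000000 in
lemma vanish' {R : Type*} [CommRing R] (P : Finset (Fin n)) (hP : P.Nonempty)
    (hP' : (Finset.univ \ P).Nonempty)
    (x y : Finset (Fin n) → R) (hx : x ∅ = 1) (hy : y ∅ = 1) :
    ∑ α ∈ setPtns n, muR R #α * ∏ A ∈ α, (x (A ∩ P) * y (A \ P)) = 0 := by
  have hpd : Disjoint P (Finset.univ \ P) := Finset.disjoint_sdiff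
  have hPne : P ≠ Finset.univ \ P := by
    intro h
    have hpd' := hpd
    rw [← h] at hpd'
    exact hP.ne_empty (disjoint_self.1 hpd')
  let pp : FP n :=
    { parts := {P, Finset.univ \ P}
      supIndep := (Finset.supIndep_pair hPne).2 hpd
      sup_parts := by
        simp only [Finset.sup_insert, Finset.sup_singleton, id_eq, Finset.sup_eq_union]
        rw [Finset.union_sdiff_of_subset (Finset.subset_univ P)]
      bot_notMem := by
        rw [Finset.bot_eq_empty]
        intro h
        rcases Finset.mem_insert.1 h with h | h
        · exact hP.ne_empty h.symm
        · exact hP'.ne_empty ((Finset.mem_singleton.1 h).symm) }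
  have hppparts : pp.parts = {P, Finset.univ \ P} := rfl
  have hppcard : 2 ≤ #pp.parts := by
    rw [hppparts, Finset.card_insert_of_notMem (fun h => hPne (Finset.mem_singleton.1 h)),
      Finset.card_singleton]
  rw [sum_setPtns (fun α => muR R #α * ∏ A ∈ α, (x (A ∩ P) * y (A \ P)))]
  calc ∑ Q : FP n, muR R #Q.parts * ∏ A ∈ Q.parts, (x (A ∩ P) * y (A \ P))
      = ∑ Q : FP n, muR R #Q.parts *
          ∏ B ∈ (Q ⊓ pp).parts, (if B ⊆ P then x B else y B) := by
        refine Finset.sum_congr rfl fun Q _ => ?_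
        rw [prodlem P pp hppparts x y hx hy Q]
    _ = 0 := vanishFP pp hppcard (fun c => ∏ B ∈ c.parts, (if B ⊆ P then x B else y B))

lemma coeff_useries (f : Ptn → ℂ) (e : Ptn) : MvPowerSeries.coeff e (useries f) = f e := rfl

lemma constantCoeff_E : MvPowerSeries.constantCoeff (σ := ℕ+) (R := ℂ) (useries fun _ => 1) ≠ 0 := by
  show (1 : ℂ) ≠ 0
  exact one_ne_zero

lemma E_mul_inv : (useries fun _ => 1) * (useries fun _ => 1)⁻¹ = 1 :=
  MvPowerSeries.mul_inv_cancel _ constantCoeff_E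

lemma ubracket_eq (f : Ptn → ℂ) (D : MvPowerSeries ℕ+ ℂ)
    (h : useries f = D * useries (fun _ => 1)) : ubracket f = D := by
  rw [ubracket, h, mul_assoc, E_mul_inv, mul_one]

lemma ubracket_one : ubracket (fun _ => 1) = 1 := ubracket_eq _ 1 (by rw [one_mul])

def DepOn (f : Ptn → ℂ) (S : Set ℕ+) : Prop :=
  ∀ a b : Ptn, (∀ v ∈ S, a v = b v) → f a = f b

lemma ubracket_mul {f g : Ptn → ℂ} {S T : Set ℕ+} (hf : DepOn f S) (hg : DepOn g T)
    (hST : Disjoint S T) :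
    ubracket (fun l => f l * g l) = ubracket f * ubracket g := by
  have key : useries (fun l => f l * g l) * useries (fun _ => 1) = useries f * useries g := by
    apply MvPowerSeries.ext
    intro e
    rw [MvPowerSeries.coeff_mul, MvPowerSeries.coeff_mul]
    have hTnot : ∀ v ∈ S, v ∉ T := fun v hv hvT => Set.disjoint_left.1 hST hv hvT
    refine Finset.sum_nbij' (i := fun p => (p.1.filter (fun v => ¬ v ∈ T) + p.2.filter (fun v => v ∈ T),
        p.2.filter (fun v => ¬ v ∈ T) + p.1.filter (fun v => v ∈ T)))
      (j := fun p => (p.1.filter (fun v => ¬ v ∈ T) + p.2.filter (fun v => v ∈ T),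
        p.2.filter (fun v => ¬ v ∈ T) + p.1.filter (fun v => v ∈ T))) ?_ ?_ ?_ ?_ ?_
    · rintro ⟨a, b⟩ hp
      dsimp only
      rw [Finset.HasAntidiagonal.mem_antidiagonal] at hp ⊢
      ext v
      have := DFunLike.congr_fun hp v
      simp only [Finsupp.add_apply, Finsupp.filter_apply] at this ⊢
      by_cases hv : v ∈ T <;> simp [hv] <;> omega
    · rintro ⟨a, b⟩ hp
      dsimp only
      rw [Finset.HasAntidiagonal.mem_antidiagonal] at hp ⊢
      ext v
      have := DFunLike.congr_fun hp v
      simp only [Finsupp.add_apply, Finsupp.filter_apply] at this ⊢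
      by_cases hv : v ∈ T <;> simp [hv] <;> omega
    · rintro ⟨a, b⟩ _
      dsimp only
      refine Prod.ext ?_ ?_ <;>
        · ext v
          simp only [Finsupp.add_apply, Finsupp.filter_apply]
          by_cases hv : v ∈ T <;> simp [hv]
    · rintro ⟨a, b⟩ _
      dsimp only
      refine Prod.ext ?_ ?_ <;>
        · ext v
          simp only [Finsupp.add_apply, Finsupp.filter_apply]
          by_cases hv : v ∈ T <;> simp [hv]
    · rintro ⟨a, b⟩ _
      dsimp only
      simp only [coeff_useries, mul_one]
      congr 1
      · apply hf
        intro v hv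
        simp [Finsupp.add_apply, Finsupp.filter_apply, hTnot v hv]
      · apply hg
        intro v hv
        simp [Finsupp.add_apply, Finsupp.filter_apply, hv]
  calc ubracket (fun l => f l * g l)
      = useries (fun l => f l * g l) * ((useries fun _ => 1) * (useries fun _ => 1)⁻¹) *
        (useries fun _ => 1)⁻¹ := by rw [E_mul_inv, mul_one]; rfl
    _ = (useries (fun l => f l * g l) * useries (fun _ => 1)) *
        ((useries fun _ => 1)⁻¹ * (useries fun _ => 1)⁻¹) := by ring
    _ = (useries f * useries g) * ((useries fun _ => 1)⁻¹ * (useries fun _ => 1)⁻¹) := by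
        rw [key]
    _ = ubracket f * ubracket g := by rw [ubracket, ubracket]; ring

/-- Embedding of a one-variable power series as an `MvPowerSeries` in the variable `v`. -/
def Phi (v : ℕ+) (p : PowerSeries ℂ) : MvPowerSeries ℕ+ ℂ :=
  fun e => if e = Finsupp.single v (e v) then PowerSeries.coeff (e v) p else 0

lemma coeff_Phi (v : ℕ+) (p : PowerSeries ℂ) (e : Ptn) :
    MvPowerSeries.coeff e (Phi v p) =
      if e = Finsupp.single v (e v) then PowerSeries.coeff (e v) p else 0 := rfl

lemma Phi_single (v : ℕ+) (p : PowerSeries ℂ) (r : ℕ) :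
    MvPowerSeries.coeff (Finsupp.single v r) (Phi v p) = PowerSeries.coeff r p := by
  rw [coeff_Phi, Finsupp.single_eq_same, if_pos rfl]

lemma Phi_C (v : ℕ+) (a : ℂ) : Phi v (PowerSeries.C (R := ℂ) a) = MvPowerSeries.C (σ := ℕ+) (R := ℂ) a := by
  apply MvPowerSeries.ext
  intro e
  rw [coeff_Phi, MvPowerSeries.coeff_C]
  rcases eq_or_ne e 0 with rfl | he
  · simp
  · rw [if_neg he]
    by_cases h : e = Finsupp.single v (e v)
    · rw [if_pos h, PowerSeries.coeff_C, if_neg, ]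
      intro h0
      exact he (by rw [h, h0, Finsupp.single_zero])
    · rw [if_neg h]

lemma Phi_mul (v : ℕ+) (p q : PowerSeries ℂ) : Phi v (p * q) = Phi v p * Phi v q := by
  apply MvPowerSeries.ext
  intro e
  rw [MvPowerSeries.coeff_mul, coeff_Phi]
  by_cases he : e = Finsupp.single v (e v)
  · rw [if_pos he]
    conv_rhs => rw [he]
    rw [Finsupp.antidiagonal_single, Finset.sum_map]
    rw [PowerSeries.coeff_mul]
    refine Finset.sum_congr rfl fun x _ => ?_
    simp only [Function.Embedding.coe_prodMap, Function.Embedding.coeFn_mk, Prod.map_fst, Prod.map_snd]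
    rw [Phi_single, Phi_single]
  · rw [if_neg he]
    symm
    refine Finset.sum_eq_zero fun x hx => ?_
    rw [Finset.HasAntidiagonal.mem_antidiagonal] at hx
    by_cases h1 : x.1 = Finsupp.single v (x.1 v)
    · by_cases h2 : x.2 = Finsupp.single v (x.2 v)
      · exfalso
        apply he
        rw [← hx, h1, h2, ← Finsupp.single_add]
        ext w
        rcases eq_or_ne w v with rfl | hw
        · simp
        · simp [Finsupp.single_apply_eq_zero, hw, Ne.symm hw]
      · rw [coeff_Phi _ _ x.2, if_neg h2, mul_zero]
    · rw [coeff_Phi _ _ x.1, if_neg h1, zero_mul]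

lemma Phi_add (v : ℕ+) (p q : PowerSeries ℂ) : Phi v (p + q) = Phi v p + Phi v q := by
  apply MvPowerSeries.ext
  intro e
  rw [map_add, coeff_Phi, coeff_Phi, coeff_Phi]
  by_cases he : e = Finsupp.single v (e v)
  · rw [if_pos he, if_pos he, if_pos he, map_add]
  · rw [if_neg he, if_neg he, if_neg he, add_zero]

/-- `Phi` as a ring homomorphism. -/
def PhiHom (v : ℕ+) : PowerSeries ℂ →+* MvPowerSeries ℕ+ ℂ where
  toFun := Phi v
  map_one' := by rw [← map_one (PowerSeries.C (R := ℂ)), Phi_C, map_one]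
  map_mul' := Phi_mul v
  map_zero' := by
    apply MvPowerSeries.ext
    intro e
    rw [coeff_Phi]
    simp
  map_add' := Phi_add v

lemma sum_disc (h : ℕ → ℂ) (h0 : h 0 = 0) (k : ℕ) :
    ∑ r ∈ Finset.range (k + 1), disc h r = h k := by
  induction k with
  | zero => simp [disc, h0]
  | succ k ih =>
    rw [Finset.sum_range_succ, ih]
    simp only [disc, Nat.succ_ne_zero, if_false, Nat.add_sub_cancel]
    ring

lemma ubracket_single (v : ℕ+) (h : ℕ → ℂ) (h0 : h 0 = 0) :
    ubracket (fun l => h (l v)) = Phi v (PowerSeries.mk (disc h)) := by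
  apply ubracket_eq
  apply MvPowerSeries.ext
  intro e
  rw [MvPowerSeries.coeff_mul]
  have hzero : ∀ p ∈ Finset.HasAntidiagonal.antidiagonal (e : Ptn),
      (MvPowerSeries.coeff p.1) (Phi v (PowerSeries.mk (disc h))) *
        (MvPowerSeries.coeff p.2) (useries fun _ => 1) ≠ 0 →
      p.1 = Finsupp.single v (p.1 v) := by
    intro p _ hp
    by_contra hne
    exact hp (by rw [coeff_Phi, if_neg hne, zero_mul])
  rw [← Finset.sum_filter_of_ne hzero]
  have hbij : ∑ p ∈ (Finset.HasAntidiagonal.antidiagonal (e : Ptn)).filter (fun p => p.1 = Finsupp.single v (p.1 v)),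
      (MvPowerSeries.coeff p.1) (Phi v (PowerSeries.mk (disc h))) *
        (MvPowerSeries.coeff p.2) (useries fun _ => 1)
      = ∑ r ∈ Finset.range (e v + 1), disc h r := by
    refine Finset.sum_nbij' (i := fun p => p.1 v)
      (j := fun r => (Finsupp.single v r, e - Finsupp.single v r)) ?_ ?_ ?_ ?_ ?_
    · rintro ⟨a, b⟩ hp
      obtain ⟨hmem, _⟩ := Finset.mem_filter.1 hp
      rw [Finset.HasAntidiagonal.mem_antidiagonal] at hmem
      have := DFunLike.congr_fun hmem v
      simp only [Finsupp.add_apply] at this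
      simp only [Finset.mem_range]
      omega
    · intro r hr
      rw [Finset.mem_range] at hr
      refine Finset.mem_filter.2 ⟨Finset.HasAntidiagonal.mem_antidiagonal.2 ?_, ?_⟩
      · ext w
        simp only [Finsupp.add_apply, Finsupp.tsub_apply]
        rcases eq_or_ne w v with rfl | hw
        · rw [Finsupp.single_eq_same]; omega
        · rw [Finsupp.single_eq_of_ne hw]; omega
      · rw [Finsupp.single_eq_same]
    · rintro ⟨a, b⟩ hp
      obtain ⟨hmem, hsingle⟩ := Finset.mem_filter.1 hp
      rw [Finset.HasAntidiagonal.mem_antidiagonal] at hmem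
      dsimp only
      refine Prod.ext ?_ ?_
      · exact hsingle.symm
      · dsimp only
        ext w
        have := DFunLike.congr_fun hmem w
        have h2 := DFunLike.congr_fun hsingle w
        simp only [Finsupp.add_apply, Finsupp.tsub_apply] at this h2 ⊢
        omega
    · intro r hr
      dsimp only
      rw [Finsupp.single_eq_same]
    · rintro ⟨a, b⟩ hp
      obtain ⟨_, hsingle⟩ := Finset.mem_filter.1 hp
      have hs : a = Finsupp.single v (a v) := hsingle
      dsimp only
      conv_lhs => rw [hs]
      rw [Phi_single, PowerSeries.coeff_mk]
      show disc h (a v) * (1 : ℂ) = disc h (a v)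
      rw [mul_one]
  rw [hbij, sum_disc h h0]
  rfl

end Aux


lemma PhiHom_apply (v : ℕ+) (p : PowerSeries ℂ) (e : Ptn) :
    (PhiHom v p) e = if e = Finsupp.single v (e v) then PowerSeries.coeff (e v) p else 0 := rfl

lemma C_muTop {n : ℕ} (α : Finset (Finset (Fin n))) :
    MvPowerSeries.C (σ := ℕ+) (R := ℂ) (muTop α) = muR (MvPowerSeries ℕ+ ℂ) #α := by
  rw [muTop, muR, map_mul, map_pow, map_neg, map_one, map_natCast]

theorem stmt5 (n : ℕ) (hn : 0 < n) (m : Fin n → ℕ+) (g : Fin n → ℕ → ℂ)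
    (hg : ∀ j, g j 0 = 0) :
    connU (fun j l => g j (l (m j))) =
      fun e => if ∀ j k : Fin n, m j = m k then
        ∑' r : ℕ+, if e = Finsupp.single (m ⟨0, hn⟩) (r : ℕ) then gConn g (r : ℕ) else 0
      else 0 := by
  by_cases hall : ∀ j k : Fin n, m j = m k
  case neg =>
    have h0 : connU (fun j l => g j (l (m j))) = 0 := by
      obtain ⟨j₀, hj⟩ := not_forall.1 hall
      obtain ⟨k₀, hk⟩ := not_forall.1 hj
      set P : Finset (Fin n) := Finset.univ.filter (fun a => m a = m j₀) with hPdef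
      have hPmem : ∀ a, a ∈ P ↔ m a = m j₀ := by
        intro a; simp [hPdef]
      have hPne : P.Nonempty := ⟨j₀, (hPmem j₀).2 rfl⟩
      have hPne' : (Finset.univ \ P).Nonempty :=
        ⟨k₀, Finset.mem_sdiff.2 ⟨Finset.mem_univ _, fun hmem => hk ((hPmem k₀).1 hmem).symm⟩⟩
      set W : Finset (Fin n) → MvPowerSeries ℕ+ ℂ :=
        fun S => ubracket (fun l => ∏ a ∈ S, g a (l (m a))) with hWdef
      have hW0 : W ∅ = 1 := by
        rw [hWdef]
        dsimp only
        rw [show (fun l : Ptn => ∏ a ∈ (∅ : Finset (Fin n)), g a (l (m a))) =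
          fun _ => (1 : ℂ) from funext fun l => Finset.prod_empty]
        exact ubracket_one
      have hsplit : ∀ A : Finset (Fin n),
          ubracket (fun l => ∏ a ∈ A, g a (l (m a))) = W (A ∩ P) * W (A \ P) := by
        intro A
        have hprod : (fun l : Ptn => ∏ a ∈ A, g a (l (m a))) =
            fun l => (∏ a ∈ A ∩ P, g a (l (m a))) * ∏ a ∈ A \ P, g a (l (m a)) := by
          funext l
          rw [Finset.prod_inter_mul_prod_diff]
        rw [hprod, hWdef]
        refine ubracket_mul (S := (((A ∩ P).image m : Finset ℕ+) : Set ℕ+))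
          (T := (((A \ P).image m : Finset ℕ+) : Set ℕ+)) ?_ ?_ ?_
        · intro a b hab
          refine Finset.prod_congr rfl fun x hx => ?_
          rw [hab (m x) (Finset.mem_coe.2 (Finset.mem_image_of_mem m hx))]
        · intro a b hab
          refine Finset.prod_congr rfl fun x hx => ?_
          rw [hab (m x) (Finset.mem_coe.2 (Finset.mem_image_of_mem m hx))]
        · rw [Set.disjoint_left]
          intro v hv1 hv2
          obtain ⟨a, ha, rfl⟩ := Finset.mem_image.1 (Finset.mem_coe.1 hv1)
          obtain ⟨b, hb, hEq⟩ := Finset.mem_image.1 (Finset.mem_coe.1 hv2)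
          have ha' : m a = m j₀ := (hPmem a).1 (Finset.mem_inter.1 ha).2
          have hb' : ¬ m b = m j₀ := fun hmb =>
            (Finset.mem_sdiff.1 hb).2 ((hPmem b).2 hmb)
          exact hb' (hEq.trans ha')
      rw [connU]
      calc ∑ α ∈ setPtns n, MvPowerSeries.C (σ := ℕ+) (R := ℂ) (muTop α) *
            ∏ A ∈ α, ubracket (fun l => ∏ a ∈ A, g a (l (m a)))
          = ∑ α ∈ setPtns n, muR (MvPowerSeries ℕ+ ℂ) #α *
            ∏ A ∈ α, (W (A ∩ P) * W (A \ P)) := by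
            refine Finset.sum_congr rfl fun α hα => ?_
            rw [C_muTop]
            congr 1
            exact Finset.prod_congr rfl fun A hA => hsplit A
        _ = 0 := vanish' P hPne hPne' W W hW0 hW0
    funext e
    rw [if_neg hall]
    exact congrFun h0 e
  case pos =>
    set v : ℕ+ := m ⟨0, hn⟩ with hv
    have hmv : ∀ j, m j = v := fun j => hall j ⟨0, hn⟩
    have hstep : connU (fun j l => g j (l (m j))) =
        PhiHom v (∑ α ∈ setPtns n, PowerSeries.C (R := ℂ) (muTop α) *
          ∏ A ∈ α, PowerSeries.mk (disc fun x => ∏ a ∈ A, g a x)) := by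
      rw [connU, map_sum]
      refine Finset.sum_congr rfl fun α hα => ?_
      rw [map_mul, map_prod]
      have hαptn : IsSetPtn α := (Finset.mem_filter.1 hα).2
      congr 1
      · exact (Phi_C v _).symm
      · refine Finset.prod_congr rfl fun A hA => ?_
        have hA0 : (fun x => ∏ a ∈ A, g a x) 0 = 0 := by
          obtain ⟨a₀, ha₀⟩ := hαptn.1 A hA
          exact Finset.prod_eq_zero ha₀ (hg a₀)
        have hfeq : (fun l : Ptn => ∏ a ∈ A, g a (l (m a))) =
            fun l => (fun x => ∏ a ∈ A, g a x) (l v) := by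
          funext l
          exact Finset.prod_congr rfl fun a _ => by rw [hmv a]
        show ubracket _ = _
        rw [show (fun l : Ptn => ∏ a ∈ A, (fun j (l' : Ptn) => g j (l' (m j))) a l) =
          (fun l : Ptn => ∏ a ∈ A, g a (l (m a))) from rfl, hfeq]
        exact ubracket_single v (fun x => ∏ a ∈ A, g a x) hA0
    funext e
    rw [if_pos hall, congrFun hstep e, PhiHom_apply]
    have hgconn : ∀ r : ℕ, PowerSeries.coeff r (∑ α ∈ setPtns n, PowerSeries.C (R := ℂ) (muTop α) *
        ∏ A ∈ α, PowerSeries.mk (disc fun x => ∏ a ∈ A, g a x)) = gConn g r :=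
      fun r => rfl
    by_cases he : e = Finsupp.single v (e v)
    · rw [if_pos he]
      by_cases hev : e v = 0
      · have he0 : e = 0 := by rw [he, hev, Finsupp.single_zero]
        have hterm : ∀ r : ℕ+,
            (if e = Finsupp.single (m ⟨0, hn⟩) (r : ℕ) then gConn g (r : ℕ) else 0) = 0 := by
          intro r
          refine if_neg fun hEq => ?_
          have h1 : e v = (r : ℕ) := by
            have := DFunLike.congr_fun hEq v
            rwa [← hv, Finsupp.single_eq_same] at this
          rw [hev] at h1
          exact r.pos.ne' h1.symm
        rw [tsum_congr hterm, tsum_zero]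
        rw [map_sum]
        refine Finset.sum_eq_zero fun α hα => ?_
        have hαptn : IsSetPtn α := (Finset.mem_filter.1 hα).2
        obtain ⟨A₀, ⟨hA₀, _⟩, _⟩ := hαptn.2 ⟨0, hn⟩
        rw [hev, PowerSeries.coeff_zero_eq_constantCoeff, map_mul, map_prod]
        rw [Finset.prod_eq_zero hA₀, mul_zero]
        rw [PowerSeries.constantCoeff_mk]
        simp [disc]
      · rw [hgconn]
        have hr₀ : (0 : ℕ) < e v := Nat.pos_of_ne_zero hev
        have hcond : e = Finsupp.single v ((⟨e v, hr₀⟩ : ℕ+) : ℕ) := he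
        refine Eq.trans ?_ (tsum_eq_single (L := SummationFilter.unconditional ℕ+) (⟨e v, hr₀⟩ : ℕ+) ?_).symm
        · exact (if_pos hcond).symm
        · intro r hr
          refine if_neg fun hEq => ?_
          apply hr
          have h1 : e v = (r : ℕ) := by
            have := DFunLike.congr_fun hEq v
            rwa [Finsupp.single_eq_same] at this
          exact PNat.coe_injective h1.symm
    · rw [if_neg he]
      have hterm : ∀ r : ℕ+,
          (if e = Finsupp.single (m ⟨0, hn⟩) (r : ℕ) then gConn g (r : ℕ) else 0) = 0 := by
        intro r
        refine if_neg fun hEq => ?_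
        apply he
        have h1 : e v = (r : ℕ) := by
          have := DFunLike.congr_fun hEq v
          rwa [← hv, Finsupp.single_eq_same] at this
        rw [h1]
        show e = Finsupp.single (m ⟨0, hn⟩) (r : ℕ)
        exact hEq
      rw [tsum_congr hterm, tsum_zero]
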